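/- Let u ∈ Z and let (x^n) be a sequence in Y ∪ Z. Then x^n → u in the path space topology if and only if for every index i, eventually (in n) the path x^n has length at least i and its i-th edge equals u_i (in particular the lengths l(x^n) tend to infinity). -/

import Mathlib

namespace GraphCstar

/-- A directed graph: vertices, edges, source and range maps. -/
structure Graph where
  V : Type
  Ed : Type
  src : Ed → V
  rng : Ed → V

variable (G : Graph)

/-- Validity of a list of edges as a path starting at vertex `v`. -/
def Valid : G.V → List G.Ed → Prop
  | _, [] => True
  | v, e :: l => G.src e = v ∧ Valid (G.rng e) l

/-- Terminal vertex of a list of edges starting at `v`. -/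
def rngTo : G.V → List G.Ed → G.V
  | v, [] => v
  | _, e :: l => rngTo (G.rng e) l

theorem valid_append (l₁ l₂ : List G.Ed) (v : G.V) :
    Valid G v (l₁ ++ l₂) ↔ Valid G v l₁ ∧ Valid G (rngTo G v l₁) l₂ := by
  induction l₁ generalizing v with
  | nil => simp [Valid, rngTo]
  | cons e l ih => simp [Valid, rngTo, ih, and_assoc]

theorem rngTo_append (l₁ l₂ : List G.Ed) (v : G.V) :
    rngTo G v (l₁ ++ l₂) = rngTo G (rngTo G v l₁) l₂ := by
  induction l₁ generalizing v with
  | nil => rfl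
  | cons e l ih => simp [rngTo, ih]

theorem valid_drop {v : G.V} {l : List G.Ed} (n : ℕ) (h : Valid G v l) :
    Valid G (rngTo G v (l.take n)) (l.drop n) := by
  have h' : Valid G v (l.take n ++ l.drop n) := by
    rw [List.take_append_drop]; exact h
  exact ((valid_append G _ _ _).mp h').2

/-- A finite path in the graph `G`; vertices are the paths of length `0`. -/
structure FinPath where
  start : G.V
  edges : List G.Ed
  valid : Valid G start edges

namespace FinPath

variable {G}

/-- The terminal vertex (range) of a finite path. -/
def rngF (α : FinPath G) : G.V := rngTo G α.start α.edges

/-- The length of a finite path. -/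
def len (α : FinPath G) : ℕ := α.edges.length

/-- The finite path of length `0` at the vertex `v`. -/
def vp (v : G.V) : FinPath G := ⟨v, [], trivial⟩

/-- The finite path consisting of the single edge `e`. -/
def ep (e : G.Ed) : FinPath G := ⟨G.src e, [e], ⟨rfl, trivial⟩⟩

/-- Concatenation of finite paths. -/
def concat (α β : FinPath G) (h : β.start = α.rngF) : FinPath G :=
  ⟨α.start, α.edges ++ β.edges,
    (valid_append G _ _ _).mpr
      ⟨α.valid, by
        show Valid G α.rngF β.edges
        rw [← h]; exact β.valid⟩⟩

theorem rngF_concat (α β : FinPath G) (h : β.start = α.rngF) :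
    (α.concat β h).rngF = β.rngF := by
  show rngTo G α.start (α.edges ++ β.edges) = _
  rw [rngTo_append]
  show rngTo G α.rngF β.edges = _
  rw [← h]; rfl

end FinPath

/-- `α` is an initial segment of `β`. -/
def IsPref (α β : FinPath G) : Prop := α.start = β.start ∧ α.edges <+: β.edges

/-- The "remainder" path: if `α` is an initial segment of `β`, the path `μ` with
`β = αμ` (for other inputs the value is junk). -/
def diff (α β : FinPath G) : FinPath G :=
  ⟨rngTo G β.start (β.edges.take α.edges.length),
    β.edges.drop α.edges.length, valid_drop G _ β.valid⟩

open Classical in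
/-- Totalized concatenation of finite paths (junk value when endpoints do not match). -/
noncomputable def catP (α β : FinPath G) : FinPath G :=
  if h : β.start = α.rngF then α.concat β h else α

open Classical in
/-- The product on `T = {(α,β) ∈ Y × Y : r(α) = r(β)} ∪ {z}`, with `z` encoded as `none`. -/
noncomputable def mulT :
    Option (FinPath G × FinPath G) → Option (FinPath G × FinPath G) →
      Option (FinPath G × FinPath G)
  | none, _ => none
  | _, none => none
  | some (α₁, β₁), some (α₂, β₂) =>
    if IsPref G β₁ α₂ then some (catP G α₁ (diff G β₁ α₂), β₂)
    else if IsPref G α₂ β₁ then some (α₁, catP G β₂ (diff G α₂ β₁))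
    else none

/-- The involution on `T`. -/
def starT :
    Option (FinPath G × FinPath G) → Option (FinPath G × FinPath G)
  | none => none
  | some (α, β) => some (β, α)

/-- The subset of `Option (FinPath G × FinPath G)` corresponding to
`T = {(α,β) : r(α) = r(β)} ∪ {z}`. -/
def TsetT : Set (Option (FinPath G × FinPath G)) :=
  {t | ∀ α β : FinPath G, t = some (α, β) → α.rngF = β.rngF}

/-- An infinite path in the graph `G`. -/
structure InfPath where
  seq : ℕ → G.Ed
  valid : ∀ i, G.src (seq (i + 1)) = G.rng (seq i)

/-- The initial vertex of an infinite path. -/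
def InfPath.start {G : Graph} (z : InfPath G) : G.V := G.src (z.seq 0)

/-- Prepending an edge to an infinite path. -/
def consInf (e : G.Ed) (z : InfPath G) (h : z.start = G.rng e) : InfPath G where
  seq := fun n =>
    match n with
    | 0 => e
    | m + 1 => z.seq m
  valid := fun i =>
    match i with
    | 0 => h
    | m + 1 => z.valid m

/-- Prepending a finite edge list to an infinite path (with the starting vertex recorded). -/
def appendInfAux :
    (l : List G.Ed) → (v : G.V) → Valid G v l → (z : InfPath G) →
      z.start = rngTo G v l → {w : InfPath G // w.start = v}
  | [], _, _, z, h => ⟨z, h⟩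
  | e :: l, v, hv, z, h =>
    let w := appendInfAux l (G.rng e) hv.2 z h
    ⟨consInf G e w.1 w.2, hv.1⟩

/-- Concatenation of a finite path with an infinite path. -/
def FinPath.concatInf {G : Graph} (α : FinPath G) (z : InfPath G)
    (h : z.start = α.rngF) : InfPath G :=
  (appendInfAux G α.edges α.start α.valid z h).1

/-- The path space `Y ∪ Z` of all finite and infinite paths. -/
def PathSp := FinPath G ⊕ InfPath G

/-- The initial vertex of a (finite or infinite) path. -/
def startOf : PathSp G → G.V
  | .inl α => α.start
  | .inr z => z.start

/-- The length of a path, in `ℕ∞`. -/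
def lenOf : PathSp G → ℕ∞
  | .inl α => (α.edges.length : ℕ∞)
  | .inr _ => ⊤

/-- The `i`-th edge (0-indexed) of a path, if it exists. -/
def nthEdge : PathSp G → ℕ → Option G.Ed
  | .inl α, i => α.edges[i]?
  | .inr z, i => some (z.seq i)

/-- `x = αγ` for some (finite or infinite, possibly length `0`) path `γ`;
that is, `α` is an initial segment of `x`, i.e. `x ∈ D_α`. -/
def Ext (α : FinPath G) (x : PathSp G) : Prop :=
  (∃ (β : FinPath G) (h : β.start = α.rngF), x = .inl (α.concat β h)) ∨
  (∃ (w : InfPath G) (h : w.start = α.rngF), x = .inr (α.concatInf w h))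

/-- The basic set `D_α ⊆ Y ∪ Z`. -/
def Dset (α : FinPath G) : Set (PathSp G) := {x | Ext G α x}

/-- The topology on the path space, generated by the sets `D_α` and their complements. -/
def pathTop : TopologicalSpace (PathSp G) :=
  .generateFrom (Set.range (Dset G) ∪ Set.range fun α => (Dset G α)ᶜ)

/-- The vertex `v` emits infinitely many edges. -/
def Vinf (v : G.V) : Prop := {e | G.src e = v}.Infinite

/-- Membership in `X = Y_∞ ∪ Z`. -/
def memX : PathSp G → Prop
  | .inl α => Vinf G α.rngF
  | .inr _ => True

/-- The set `X = Y_∞ ∪ Z`. -/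
def Xset : Set (PathSp G) := {x | memX G x}

/-- Tail equivalence of paths: `x = αγ` and `y = βγ` for finite paths `α, β`
and a common (finite or infinite) path `γ`. -/
def TailEq (x y : PathSp G) : Prop :=
  (∃ (α β γ : FinPath G) (h₁ : γ.start = α.rngF) (h₂ : γ.start = β.rngF),
      x = .inl (α.concat γ h₁) ∧ y = .inl (β.concat γ h₂)) ∨
  (∃ (α β : FinPath G) (w : InfPath G) (h₁ : w.start = α.rngF)
      (h₂ : w.start = β.rngF),
      x = .inr (α.concatInf w h₁) ∧ y = .inr (β.concatInf w h₂))

/-- A subset of the path space is invariant (a union of tail-equivalence classes). -/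
def InvariantS (F : Set (PathSp G)) : Prop :=
  ∀ x ∈ F, ∀ y, TailEq G x y → y ∈ F

/-- Membership `(x, k, y) ∈ G` for the path groupoid: `x = αγ`, `y = βγ` and
`k = l(α) - l(β)`. -/
def InG (x : PathSp G) (k : ℤ) (y : PathSp G) : Prop :=
  (∃ (α β γ : FinPath G) (h₁ : γ.start = α.rngF) (h₂ : γ.start = β.rngF),
      x = .inl (α.concat γ h₁) ∧ y = .inl (β.concat γ h₂) ∧
        k = (α.len : ℤ) - (β.len : ℤ)) ∨
  (∃ (α β : FinPath G) (w : InfPath G) (h₁ : w.start = α.rngF)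
      (h₂ : w.start = β.rngF),
      x = .inr (α.concatInf w h₁) ∧ y = .inr (β.concatInf w h₂) ∧
        k = (α.len : ℤ) - (β.len : ℤ))

/-- There is a finite path from `u` to `w`. -/
def Reach (u w : G.V) : Prop := ∃ β : FinPath G, β.start = u ∧ β.rngF = w

/-- A loop based at the vertex `v`. -/
def LoopAt (v : G.V) (α : FinPath G) : Prop :=
  α.edges ≠ [] ∧ α.start = v ∧ α.rngF = v ∧
    ∀ i e, i + 1 < α.edges.length → α.edges[i]? = some e → G.rng e ≠ v

/-- Condition (K): no vertex has exactly one loop based at it. -/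
def CondK : Prop := ¬ ∃ v : G.V, ∃! α : FinPath G, LoopAt G v α

/-- A point of the path space has trivial isotropy if whenever `x = αγ = βγ`
then `l(α) = l(β)`. -/
def TrivIso (x : PathSp G) : Prop :=
  ∀ α β : FinPath G,
    ((∃ (γ : FinPath G) (h₁ : γ.start = α.rngF) (h₂ : γ.start = β.rngF),
        x = .inl (α.concat γ h₁) ∧ x = .inl (β.concat γ h₂)) ∨
     (∃ (w : InfPath G) (h₁ : w.start = α.rngF) (h₂ : w.start = β.rngF),
        x = .inr (α.concatInf w h₁) ∧ x = .inr (β.concatInf w h₂))) →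
    α.len = β.len

/-!
Whether a path lies in `D_α` depends only on its source and its first `l(α)` edges. Hence
once `xⁿ` agrees with `u` on the first `l(α) + 1` edges (which also fixes the source),
`xⁿ ∈ D_α ↔ u ∈ D_α`, so `xⁿ` eventually enters every generating set `D_α` or `D_αᶜ` that
contains `u`. Conversely, the cylinders `D_{u₁⋯uₖ}` are open neighbourhoods of `u`.
-/

attribute [ext] FinPath InfPath

section PathSpace

variable {G : Graph}

theorem appendInfAux_seq (l : List G.Ed) (v : G.V) (hv : Valid G v l) (z : InfPath G)
    (h : z.start = rngTo G v l) (i : ℕ) :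
    (appendInfAux G l v hv z h).1.seq i =
      if hi : i < l.length then l[i] else z.seq (i - l.length) := by
  induction l generalizing v i with
  | nil => simp [appendInfAux]
  | cons e l ih =>
    cases i with
    | zero => simp [appendInfAux, consInf]
    | succ m =>
      simp only [appendInfAux, consInf, List.length_cons]
      refine (ih _ hv.2 h m).trans ?_
      by_cases hm : m < l.length <;> simp [hm]

theorem FinPath.concatInf_seq (α : FinPath G) (w : InfPath G) (h : w.start = α.rngF) (i : ℕ) :
    (α.concatInf w h).seq i = if hi : i < α.len then α.edges[i] else w.seq (i - α.len) :=
  appendInfAux_seq _ _ _ _ _ i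

theorem FinPath.start_concatInf (α : FinPath G) (w : InfPath G) (h : w.start = α.rngF) :
    (α.concatInf w h).start = α.start :=
  (appendInfAux G α.edges α.start α.valid w h).2

namespace InfPath

theorem valid_map_range_and_rngTo (z : InfPath G) (k : ℕ) :
    Valid G z.start ((List.range k).map z.seq) ∧
      rngTo G z.start ((List.range k).map z.seq) = G.src (z.seq k) := by
  induction k with
  | zero => exact ⟨trivial, rfl⟩
  | succ k ih =>
    rw [List.range_succ, List.map_append, valid_append, rngTo_append, ih.2]
    exact ⟨⟨ih.1, rfl, trivial⟩, (z.valid k).symm⟩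

def take (z : InfPath G) (k : ℕ) : FinPath G :=
  ⟨z.start, (List.range k).map z.seq, (z.valid_map_range_and_rngTo k).1⟩

theorem len_take (z : InfPath G) (k : ℕ) : (z.take k).len = k := by
  simp [take, FinPath.len]

theorem rngF_take (z : InfPath G) (k : ℕ) : (z.take k).rngF = G.src (z.seq k) :=
  (z.valid_map_range_and_rngTo k).2

def drop (z : InfPath G) (k : ℕ) : InfPath G :=
  ⟨fun i => z.seq (i + k), fun i => by simpa [Nat.add_right_comm] using z.valid (i + k)⟩

theorem start_drop (z : InfPath G) (k : ℕ) : (z.drop k).start = G.src (z.seq k) := by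
  simp [drop, start]

theorem take_concatInf_drop (z : InfPath G) (k : ℕ) :
    (z.take k).concatInf (z.drop k) ((z.start_drop k).trans (z.rngF_take k).symm) = z := by
  ext i
  rw [FinPath.concatInf_seq]
  split_ifs with hi
  · simp [take]
  · rw [len_take] at hi
    simp [drop, len_take, Nat.sub_add_cancel (Nat.le_of_not_lt hi)]

theorem inr_mem_Dset_take (z : InfPath G) (k : ℕ) : (.inr z : PathSp G) ∈ Dset G (z.take k) :=
  .inr ⟨_, _, congrArg Sum.inr (z.take_concatInf_drop k).symm⟩

end InfPath

theorem inl_mem_Dset_of_isPref {α β : FinPath G} (h : IsPref G α β) :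
    (.inl β : PathSp G) ∈ Dset G α := by
  obtain ⟨hs, hp⟩ := h
  refine .inl ⟨diff G α β, ?_, ?_⟩
  · show rngTo G β.start (β.edges.take α.edges.length) = rngTo G α.start α.edges
    rw [← List.prefix_iff_eq_take.mp hp, hs]
  · congr 1
    ext1
    · exact hs.symm
    · exact (List.prefix_iff_eq_append.mp hp).symm

theorem mem_Dset_iff (α : FinPath G) (x : PathSp G) :
    x ∈ Dset G α ↔ startOf G x = α.start ∧ ∀ i < α.len, nthEdge G x i = α.edges[i]? := by
  constructor
  · rintro (⟨β, hβ, rfl⟩ | ⟨w, hw, rfl⟩)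
    · exact ⟨rfl, fun i hi => List.getElem?_append_left hi⟩
    · refine ⟨α.start_concatInf w hw, fun i hi => ?_⟩
      show some _ = _
      rw [FinPath.concatInf_seq, dif_pos hi]
      exact (List.getElem?_eq_getElem hi).symm
  · rintro ⟨hs, he⟩
    cases x with
    | inl β =>
      exact inl_mem_Dset_of_isPref ⟨hs.symm, List.prefix_iff_getElem?.mpr fun i hi =>
        (he i hi).trans (List.getElem?_eq_getElem hi)⟩
    | inr z =>
      have hα : α = z.take α.len := by
        ext1
        · exact hs.symm
        · refine List.ext_getElem? fun i => ?_
          by_cases hi : i < α.len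
          · simp [InfPath.take, ← he i hi, nthEdge, hi]
          · have hi' : α.edges.length ≤ i := Nat.le_of_not_lt hi
            simpa [InfPath.take, FinPath.len, List.getElem?_eq_none hi'] using hi'
      rw [hα]
      exact z.inr_mem_Dset_take _

theorem mem_Dset_congr (α : FinPath G) {x y : PathSp G} (hs : startOf G x = startOf G y)
    (he : ∀ i < α.len, nthEdge G x i = nthEdge G y i) : x ∈ Dset G α ↔ y ∈ Dset G α := by
  simp only [mem_Dset_iff, hs]
  exact and_congr_right fun _ => forall₂_congr fun i hi => by rw [he i hi]

theorem startOf_eq_src_of_nthEdge_zero {x : PathSp G} {e : G.Ed} (h : nthEdge G x 0 = some e) :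
    startOf G x = G.src e := by
  cases x with
  | inl β =>
    obtain ⟨start, _ | ⟨e', l⟩, hv⟩ := β
    · simp [nthEdge] at h
    · obtain rfl : e' = e := by simpa [nthEdge] using h
      exact hv.1.symm
  | inr z =>
    obtain rfl : z.seq 0 = e := by simpa [nthEdge] using h
    rfl

theorem lt_lenOf_of_nthEdge_eq_some {x : PathSp G} {i : ℕ} {e : G.Ed}
    (h : nthEdge G x i = some e) : (i : ℕ∞) < lenOf G x := by
  cases x with
  | inl β => exact Nat.cast_lt.mpr (List.getElem?_eq_some_iff.mp h).1
  | inr z => exact ENat.natCast_lt_top i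

theorem tendsto_nhds_inr_iff {ι : Type*} {l : Filter ι} (u : InfPath G) (x : ι → PathSp G) :
    Filter.Tendsto x l (@nhds (PathSp G) (pathTop G) (.inr u)) ↔
      ∀ i : ℕ, ∀ᶠ n in l, nthEdge G (x n) i = some (u.seq i) := by
  refine TopologicalSpace.tendsto_nhds_generateFrom_iff.trans ⟨fun h i => ?_, fun H => ?_⟩
  · filter_upwards [h _ (.inl ⟨u.take (i + 1), rfl⟩) (u.inr_mem_Dset_take (i + 1))] with n hn
    rw [((mem_Dset_iff _ _).mp hn).2 i (by simp [InfPath.len_take])]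
    simp [InfPath.take]
  · have hagree (k : ℕ) : ∀ᶠ n in l, ∀ i < k, nthEdge G (x n) i = some (u.seq i) := by
      simpa using (Filter.eventually_all_finset (Finset.range k)).mpr fun i _ => H i
    have hD (α : FinPath G) : ∀ᶠ n in l, x n ∈ Dset G α ↔ Sum.inr u ∈ Dset G α := by
      filter_upwards [hagree (α.len + 1)] with n hn
      exact mem_Dset_congr α (startOf_eq_src_of_nthEdge_zero (hn 0 α.len.succ_pos))
        fun i hi => hn i (by omega)
    rintro s (⟨α, rfl⟩ | ⟨α, rfl⟩) hu
    · filter_upwards [hD α] with n hn using hn.mpr hu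
    · filter_upwards [hD α] with n hn using mt hn.mp hu

end PathSpace

theorem tendsto_to_infinite_path_iff_general (G : Graph)
    (u : InfPath G) (x : ℕ → PathSp G) :
    (Filter.Tendsto x Filter.atTop (@nhds (PathSp G) (pathTop G) (Sum.inr u)) ↔
      ∀ i : ℕ, ∀ᶠ n in Filter.atTop, nthEdge G (x n) i = some (u.seq i)) ∧
    (Filter.Tendsto x Filter.atTop (@nhds (PathSp G) (pathTop G) (Sum.inr u)) →
      ∀ m : ℕ, ∀ᶠ n in Filter.atTop, (m : ℕ∞) ≤ lenOf G (x n)) := by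
  have key := tendsto_nhds_inr_iff (l := Filter.atTop) u x
  refine ⟨key, fun h m => ?_⟩
  filter_upwards [key.mp h m] with n hn
  exact (lt_lenOf_of_nthEdge_eq_some hn).le

/-- A sequence `(xⁿ)` in `Y ∪ Z` converges to an infinite path `u ∈ Z`
iff for every index `i`, eventually `xⁿ` has length at least `i + 1` and its `i`-th edge
(0-indexed) equals `u_i`; in particular the lengths of the `xⁿ` tend to infinity. -/
theorem tendsto_to_infinite_path_iff (G : Graph) [Countable G.V] [Countable G.Ed]
    (hns : ∀ v : G.V, ∃ e : G.Ed, G.src e = v)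
    (u : InfPath G) (x : ℕ → PathSp G) :
    (Filter.Tendsto x Filter.atTop (@nhds (PathSp G) (pathTop G) (Sum.inr u)) ↔
      ∀ i : ℕ, ∀ᶠ n in Filter.atTop, nthEdge G (x n) i = some (u.seq i)) ∧
    (Filter.Tendsto x Filter.atTop (@nhds (PathSp G) (pathTop G) (Sum.inr u)) →
      ∀ m : ℕ, ∀ᶠ n in Filter.atTop, (m : ℕ∞) ≤ lenOf G (x n)) :=
  tendsto_to_infinite_path_iff_general G u x

end GraphCstar
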